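/- arXiv:0906.0178 — 2 statements merged into one kernel-verified Lean document; each statement's English description precedes it below -/
import Mathlib

section
/- Let a : ℝ → ℝ be C¹ with a(t) ≠ 0 and f : ℝ → ℝ be C¹ with f ≥ 0. Define on ℝᴺ (N ≥ 2) the density ρ(t,x) = f((x₁² + x₂²)/a(t))/a(t) and velocity u(t,x) = (ȧ(t)/(2a(t)))·(x₁, x₂, x₁+x₂, ..., x₁+x₂). Then (ρ, u) satisfies the continuity equation ρ_t + ∇·(ρu) = 0 pointwise. -/
/-!
With `r = (x₁² + x₂²)/a`, the density is `f(r)/a` and depends only on `x₁, x₂`, while the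
components `uᵢ`, `i ≥ 3`, do not depend on `xᵢ`; so only the first two coordinates contribute to
the divergence. Each contributes `(ȧ/2a²)(2 xᵢ² f'(r)/a + f(r))`, and their sum
`(ȧ/a²)(r f'(r) + f(r))` cancels `ρ_t = -(ȧ/a²)(r f'(r) + f(r))`.
-/

open Function

/-- Partial derivative in the `i`-th coordinate of a function on `ℝᴺ`. -/
noncomputable def pd {N : ℕ} (i : Fin N) (g : (Fin N → ℝ) → ℝ) (x : Fin N → ℝ) : ℝ :=
  deriv (fun y => g (Function.update x i y)) (x i)

theorem pd_eq_of_hasDerivAt {N : ℕ} {i : Fin N} {g : (Fin N → ℝ) → ℝ} {x : Fin N → ℝ}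
    {φ : ℝ → ℝ} {φ' : ℝ} (hφ : ∀ y, g (update x i y) = φ y) (h : HasDerivAt φ φ' (x i)) :
    pd i g x = φ' := by
  rw [pd, funext hφ, h.deriv]

theorem pd_eq_zero_of_update_eq {N : ℕ} {i : Fin N} {g : (Fin N → ℝ) → ℝ} {x : Fin N → ℝ}
    (h : ∀ y, g (update x i y) = g x) : pd i g x = 0 := by
  simp only [pd, h, deriv_const]

theorem hasDerivAt_div_comp_div {f a : ℝ → ℝ} {r t : ℝ} (ha : DifferentiableAt ℝ a t)
    (ha0 : a t ≠ 0) (hf : DifferentiableAt ℝ f (r / a t)) :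
    HasDerivAt (fun s => f (r / a s) / a s)
      (-deriv a t / a t ^ 2 * (r / a t * deriv f (r / a t) + f (r / a t))) t := by
  have hinner := (hasDerivAt_const t r).fun_div ha.hasDerivAt ha0
  refine ((hf.hasDerivAt.comp t hinner).fun_div ha.hasDerivAt ha0).congr_deriv ?_
  simp only [comp_apply]
  field_simp
  ring

theorem hasDerivAt_div_mul_linear {f q : ℝ → ℝ} {y A k : ℝ} (hq : HasDerivAt q (2 * y) y)
    (hA : A ≠ 0) (hf : DifferentiableAt ℝ f (q y / A)) :
    HasDerivAt (fun z => f (q z / A) / A * (k * z))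
      (k / A * (2 * y ^ 2 / A * deriv f (q y / A) + f (q y / A))) y := by
  have hcomp := hf.hasDerivAt.comp y (hq.div_const A)
  refine ((hcomp.div_const A).fun_mul ((hasDerivAt_id y).const_mul k)).congr_deriv ?_
  simp only [comp_apply, id]
  field_simp

theorem stmt_2_general {N : ℕ} [NeZero N] (hN : 2 ≤ N)
    (a f : ℝ → ℝ) (ha : ContDiff ℝ 1 a) (ha0 : ∀ t, a t ≠ 0)
    (hf : ContDiff ℝ 1 f)
    (ρ : ℝ → (Fin N → ℝ) → ℝ)
    (hρ : ρ = fun t x => f ((x 0 ^ 2 + x 1 ^ 2) / a t) / a t)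
    (u : ℝ → (Fin N → ℝ) → Fin N → ℝ)
    (hu : u = fun t x i => deriv a t / (2 * a t) *
      (if i = 0 then x 0 else if i = 1 then x 1 else x 0 + x 1)) :
    ∀ (t : ℝ) (x : Fin N → ℝ),
      deriv (fun s => ρ s x) t + ∑ i : Fin N, pd i (fun y => ρ t y * u t y i) x = 0 := by
  subst hρ hu
  intro t x
  have h01 : (0 : Fin N) ≠ 1 := by
    simp [Fin.ext_iff]
    omega
  have hfd (p : ℝ) : DifferentiableAt ℝ f p := hf.differentiable one_ne_zero p
  have hρ_t := hasDerivAt_div_comp_div (r := x 0 ^ 2 + x 1 ^ 2)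
    (ha.differentiable one_ne_zero t) (ha0 t) (hfd _)
  have hflux0 := hasDerivAt_div_mul_linear (k := deriv a t / (2 * a t)) (q := fun z => z ^ 2 + x 1 ^ 2)
    (by simpa using (hasDerivAt_pow 2 (x 0)).add_const (x 1 ^ 2)) (ha0 t) (hfd _)
  have hflux1 := hasDerivAt_div_mul_linear (k := deriv a t / (2 * a t)) (q := fun z => x 0 ^ 2 + z ^ 2)
    (by simpa using (hasDerivAt_pow 2 (x 1)).const_add (x 0 ^ 2)) (ha0 t) (hfd _)
  beta_reduce
  rw [hρ_t.deriv, Fintype.sum_eq_add 0 1 h01 ?others, pd_eq_of_hasDerivAt ?update0 hflux0,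
    pd_eq_of_hasDerivAt ?update1 hflux1]
  case others =>
    rintro i ⟨hi0, hi1⟩
    refine pd_eq_zero_of_update_eq fun y => ?_
    simp [update_of_ne hi0.symm, update_of_ne hi1.symm, hi0, hi1]
  case update0 => intro y; simp [update_of_ne h01.symm]
  case update1 => intro y; simp [update_of_ne h01, h01.symm]
  field_simp
  ring

/-- The density `ρ = f((x₁²+x₂²)/a)/a` and velocity
`u = (ȧ/2a)(x₁, x₂, x₁+x₂, …, x₁+x₂)` satisfy the continuity equation. -/
theorem stmt_2 {N : ℕ} [NeZero N] (hN : 2 ≤ N)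
    (a f : ℝ → ℝ) (ha : ContDiff ℝ 1 a) (ha0 : ∀ t, a t ≠ 0)
    (hf : ContDiff ℝ 1 f) (hf0 : ∀ s, 0 ≤ f s)
    (ρ : ℝ → (Fin N → ℝ) → ℝ)
    (hρ : ρ = fun t x => f ((x 0 ^ 2 + x 1 ^ 2) / a t) / a t)
    (u : ℝ → (Fin N → ℝ) → Fin N → ℝ)
    (hu : u = fun t x i => deriv a t / (2 * a t) *
      (if i = 0 then x 0 else if i = 1 then x 1 else x 0 + x 1)) :
    ∀ (t : ℝ) (x : Fin N → ℝ),
      deriv (fun s => ρ s x) t + ∑ i : Fin N, pd i (fun y => ρ t y * u t y i) x = 0 :=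
  stmt_2_general hN a f ha ha0 hf ρ hρ u hu
end

section
/- Define ρ(t,x) = (1/a(t)²)·e^{−Φ((Ax₁+Bx₂)/a(t))/K + C}, u(t,x) = (ȧ(t)/a(t))(x₁, x₂, x₁, ..., x₁), a(t) = a₁ + a₂t with a₁ ≠ 0, and Φ a C² solution of Φ'' − (α(N)e^C/(A²+B²))·e^{−Φ/K} = 0 on ℝ. Then (ρ, u, Ψ) with Ψ(t,x) = Φ((Ax₁+Bx₂)/a(t)) solves the isothermal Euler–Poisson system ρ_t + ∇·(ρu) = 0; ρ(∂ₜuᵢ + (u·∇)uᵢ) + K∂ᵢρ = −ρ∂ᵢΨ; ΔΨ = α(N)ρ, on the time interval where a(t) ≠ 0. -/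
/-- Spatial Laplacian on `ℝᴺ`. -/
noncomputable def lap {N : ℕ} (g : (Fin N → ℝ) → ℝ) (x : Fin N → ℝ) : ℝ :=
  ∑ i : Fin N, pd i (fun y => pd i g y) x

section PartialDerivatives

variable {N : ℕ}

lemma hasDerivAt_dotProduct_update (w x : Fin N → ℝ) (i : Fin N) (s : ℝ) :
    HasDerivAt (fun s => w ⬝ᵥ Function.update x i s) (w i) s := by
  have h := HasDerivAt.fun_sum (u := Finset.univ) fun j _ =>
    (hasDerivAt_pi.mp (hasDerivAt_update x i s) j).const_mul (w j)
  simpa [dotProduct, Pi.single_apply] using h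

lemma pd_comp_dotProduct {h : ℝ → ℝ} {d : ℝ} {w x : Fin N → ℝ} (i : Fin N)
    (hh : HasDerivAt h d (w ⬝ᵥ x)) : pd i (fun y => h (w ⬝ᵥ y)) x = d * w i :=
  (hh.comp_of_eq (x i) (hasDerivAt_dotProduct_update w x i (x i)) (by simp)).deriv

lemma pd_const_mul_apply (c : ℝ) (j i : Fin N) (x : Fin N → ℝ) :
    pd i (fun y => c * y j) x = (Pi.single j c : Fin N → ℝ) i := by
  simpa using
    pd_comp_dotProduct (w := (Pi.single j c : Fin N → ℝ)) (x := x) i (hasDerivAt_id _)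

lemma pd_mul {f g : (Fin N → ℝ) → ℝ} {x : Fin N → ℝ} (i : Fin N)
    (hf : DifferentiableAt ℝ f x) (hg : DifferentiableAt ℝ g x) :
    pd i (fun y => f y * g y) x = pd i f x * g x + f x * pd i g x := by
  have hupd : DifferentiableAt ℝ (Function.update x i) (x i) :=
    (hasDerivAt_update x i (x i)).differentiableAt
  have hsection : ∀ {f : (Fin N → ℝ) → ℝ}, DifferentiableAt ℝ f x →
      DifferentiableAt ℝ (fun s => f (Function.update x i s)) (x i) := fun hf =>
    (by simpa using hf : DifferentiableAt ℝ _ (Function.update x i (x i))).comp (x i) hupd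
  have h := (hsection hf).hasDerivAt.mul (hsection hg).hasDerivAt
  simp only [Function.update_eq_self] at h
  exact h.deriv

end PartialDerivatives

section PlanarWave

variable {N : ℕ} [NeZero N]

def planeNormal (A B : ℝ) : Fin N → ℝ := Pi.single 0 A + Pi.single 1 B

lemma planeNormal_dotProduct (A B : ℝ) (y : Fin N → ℝ) :
    planeNormal A B ⬝ᵥ y = A * y 0 + B * y 1 := by
  simp [planeNormal, add_dotProduct]

lemma sum_planeNormal_sq (A B : ℝ) (h01 : (0 : Fin N) ≠ 1) :
    ∑ i : Fin N, planeNormal A B i ^ 2 = A ^ 2 + B ^ 2 := by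
  rw [Fintype.sum_eq_add 0 1 h01]
  · simp [planeNormal, h01, h01.symm]
  · rintro i ⟨hi0, hi1⟩
    simp [planeNormal, hi0, hi1]

lemma pd_comp_planar {h : ℝ → ℝ} {d A B v : ℝ} {x : Fin N → ℝ} (i : Fin N)
    (hh : HasDerivAt h d ((A * x 0 + B * x 1) / v)) :
    pd i (fun y => h ((A * y 0 + B * y 1) / v)) x = d * (planeNormal A B i / v) := by
  have hw : ∀ y : Fin N → ℝ, (A * y 0 + B * y 1) / v = (v⁻¹ • planeNormal A B) ⬝ᵥ y := by
    intro y
    rw [smul_dotProduct, planeNormal_dotProduct, smul_eq_mul, inv_mul_eq_div]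
  simp only [hw] at hh ⊢
  rw [pd_comp_dotProduct i hh, Pi.smul_apply, smul_eq_mul, inv_mul_eq_div]

lemma pd_pd_comp_planar {h : ℝ → ℝ} {A B v : ℝ} (hh : Differentiable ℝ h)
    (hh' : Differentiable ℝ (deriv h)) (i : Fin N) (x : Fin N → ℝ) :
    pd i (fun y => pd i (fun z => h ((A * z 0 + B * z 1) / v)) y) x =
      deriv (deriv h) ((A * x 0 + B * x 1) / v) * (planeNormal A B i / v) ^ 2 := by
  have hgrad : (fun y => pd i (fun z => h ((A * z 0 + B * z 1) / v)) y) =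
      fun y => deriv h ((A * y 0 + B * y 1) / v) * (planeNormal A B i / v) :=
    funext fun y => pd_comp_planar i (hh _).hasDerivAt
  rw [hgrad, pd_comp_planar (h := fun s => deriv h s * (planeNormal A B i / v)) i
    ((hh' _).hasDerivAt.mul_const _)]
  ring

end PlanarWave

section LinearVelocity

variable {N : ℕ} [NeZero N]

def copyIndex (i : Fin N) : Fin N := if i = 1 then 1 else 0

lemma copyIndex_copyIndex (i : Fin N) : copyIndex (copyIndex i) = copyIndex i := by
  unfold copyIndex
  split_ifs <;> simp_all

lemma ite_coord_eq_copyIndex (x : Fin N → ℝ) (i : Fin N) :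
    (if i = 0 then x 0 else if i = 1 then x 1 else x 0) = x (copyIndex i) := by
  rcases eq_or_ne i 1 with rfl | h1
  · simp only [copyIndex, if_true]
    split_ifs with h0
    · rw [h0]
    · rfl
  · simp [copyIndex, h1]

lemma sum_mul_pd_copy (c : ℝ) (x : Fin N → ℝ) (i : Fin N) :
    ∑ k, c * x (copyIndex k) * pd k (fun y => c * y (copyIndex i)) x =
      c ^ 2 * x (copyIndex i) := by
  simp only [pd_const_mul_apply, Pi.single_apply, mul_ite, mul_zero, Finset.sum_ite_eq',
    Finset.mem_univ, if_true, copyIndex_copyIndex]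
  ring

lemma sum_pd_copy (c : ℝ) (x : Fin N → ℝ) (h01 : (0 : Fin N) ≠ 1) :
    ∑ i, pd i (fun y => c * y (copyIndex i)) x = 2 * c := by
  simp only [pd_const_mul_apply]
  rw [Fintype.sum_eq_add 0 1 h01]
  · simp only [copyIndex, h01, ↓reduceIte, Pi.single_eq_same]
    ring
  · rintro i ⟨hi0, hi1⟩
    simp [copyIndex, hi0, hi1]

end LinearVelocity

section PlanarSolution

variable {N : ℕ} [NeZero N] (Φ : ℝ → ℝ) (K C A B : ℝ) (a : ℝ → ℝ)

noncomputable def planarDensity (t : ℝ) (x : Fin N → ℝ) : ℝ :=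
  Real.exp (-Φ ((A * x 0 + B * x 1) / a t) / K + C) / a t ^ 2

noncomputable def planarPotential (t : ℝ) (x : Fin N → ℝ) : ℝ := Φ ((A * x 0 + B * x 1) / a t)

noncomputable def planarVelocity (t : ℝ) (x : Fin N → ℝ) (i : Fin N) : ℝ :=
  deriv a t / a t * (if i = 0 then x 0 else if i = 1 then x 1 else x 0)

variable {Φ K C A B a}

lemma planarVelocity_eq (t : ℝ) (x : Fin N → ℝ) (i : Fin N) :
    planarVelocity a t x i = deriv a t / a t * x (copyIndex i) := by
  rw [planarVelocity, ite_coord_eq_copyIndex]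

lemma pd_planarDensity (hΦ : Differentiable ℝ Φ) (t : ℝ) (x : Fin N → ℝ) (i : Fin N) :
    pd i (planarDensity Φ K C A B a t) x = planarDensity Φ K C A B a t x *
      (-deriv Φ ((A * x 0 + B * x 1) / a t) / K) * (planeNormal A B i / a t) := by
  refine pd_comp_planar (h := fun s => Real.exp (-Φ s / K + C) / a t ^ 2) i ?_
  have := ((((hΦ ((A * x 0 + B * x 1) / a t)).hasDerivAt.neg).div_const K).add_const C).exp
    |>.div_const (a t ^ 2)
  refine this.congr_deriv ?_
  simp only [planarDensity, Pi.neg_apply]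
  ring

lemma pd_planarPotential (hΦ : Differentiable ℝ Φ) (t : ℝ) (x : Fin N → ℝ) (i : Fin N) :
    pd i (planarPotential Φ A B a t) x =
      deriv Φ ((A * x 0 + B * x 1) / a t) * (planeNormal A B i / a t) :=
  pd_comp_planar i (hΦ _).hasDerivAt

lemma hasDerivAt_planarDensity_time (hΦ : Differentiable ℝ Φ) {t a' : ℝ}
    (ha : HasDerivAt a a' t) (ht : a t ≠ 0) (x : Fin N → ℝ) :
    HasDerivAt (fun s => planarDensity Φ K C A B a s x)
      (planarDensity Φ K C A B a t x * (deriv Φ ((A * x 0 + B * x 1) / a t) *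
        ((A * x 0 + B * x 1) / a t) * a' / (K * a t) - 2 * a' / a t)) t := by
  have hξ := (hasDerivAt_const t (A * x 0 + B * x 1)).div ha ht
  have := ((((hΦ _).hasDerivAt.comp t hξ).neg.div_const K).add_const C).exp.div (ha.pow 2)
    (pow_ne_zero 2 ht)
  refine this.congr_deriv ?_
  simp only [planarDensity, Pi.neg_apply, Function.comp_apply, Pi.div_apply, Pi.pow_apply]
  field_simp
  ring

lemma hasDerivAt_planarVelocity_time {t : ℝ} (ha : DifferentiableAt ℝ a t)
    (ha' : HasDerivAt (deriv a) 0 t) (ht : a t ≠ 0) (x : Fin N → ℝ) (i : Fin N) :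
    HasDerivAt (fun s => planarVelocity a s x i)
      (-(deriv a t / a t) ^ 2 * x (copyIndex i)) t := by
  simp only [planarVelocity_eq]
  refine ((ha'.div ha.hasDerivAt ht).mul_const (x (copyIndex i))).congr_deriv ?_
  field_simp
  ring

end PlanarSolution

section EulerPoisson

variable {N : ℕ} [NeZero N] {Φ : ℝ → ℝ} {K C A B : ℝ} {a : ℝ → ℝ} {t : ℝ}

lemma planeNormal_dotProduct_planarVelocity (h01 : (0 : Fin N) ≠ 1) (x : Fin N → ℝ) :
    planeNormal A B ⬝ᵥ planarVelocity a t x = deriv a t / a t * (A * x 0 + B * x 1) := by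
  simp only [planeNormal, add_dotProduct, single_dotProduct, planarVelocity, ↓reduceIte, h01.symm]
  ring

theorem planar_continuity_equation (hΦ : Differentiable ℝ Φ) (ha : DifferentiableAt ℝ a t)
    (ht : a t ≠ 0) (h01 : (0 : Fin N) ≠ 1) (x : Fin N → ℝ) :
    deriv (fun s => planarDensity Φ K C A B a s x) t +
      ∑ i, pd i (fun y => planarDensity Φ K C A B a t y * planarVelocity a t y i) x = 0 := by
  have hρ : DifferentiableAt ℝ (planarDensity Φ K C A B a t) x := by
    unfold planarDensity
    fun_prop
  have hu : ∀ i, DifferentiableAt ℝ (fun y => planarVelocity a t y i) x := by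
    simp only [planarVelocity_eq]
    fun_prop
  have hdiv : ∑ i, pd i (fun y => planarVelocity a t y i) x = 2 * (deriv a t / a t) := by
    simp only [planarVelocity_eq]
    exact sum_pd_copy _ x h01
  have hflux : ∑ i, pd i (planarDensity Φ K C A B a t) x * planarVelocity a t x i =
      planarDensity Φ K C A B a t x * (-deriv Φ ((A * x 0 + B * x 1) / a t) / K) / a t *
        (deriv a t / a t * (A * x 0 + B * x 1)) := by
    rw [← planeNormal_dotProduct_planarVelocity h01, dotProduct, Finset.mul_sum]
    simp only [pd_planarDensity hΦ]
    exact Finset.sum_congr rfl fun i _ => by ring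
  rw [(hasDerivAt_planarDensity_time hΦ ha.hasDerivAt ht x).deriv,
    Finset.sum_congr rfl fun i _ => pd_mul i hρ (hu i), Finset.sum_add_distrib, hflux,
    ← Finset.mul_sum, hdiv]
  field_simp
  ring

theorem planar_momentum_equation (hK : K ≠ 0) (hΦ : Differentiable ℝ Φ)
    (ha : DifferentiableAt ℝ a t) (ha' : HasDerivAt (deriv a) 0 t) (ht : a t ≠ 0)
    (x : Fin N → ℝ) (i : Fin N) :
    planarDensity Φ K C A B a t x * (deriv (fun s => planarVelocity a s x i) t +
        ∑ k, planarVelocity a t x k * pd k (fun y => planarVelocity a t y i) x) +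
      K * pd i (planarDensity Φ K C A B a t) x =
        -(planarDensity Φ K C A B a t x * pd i (planarPotential Φ A B a t) x) := by
  rw [(hasDerivAt_planarVelocity_time ha ha' ht x i).deriv, pd_planarDensity hΦ,
    pd_planarPotential hΦ]
  simp only [planarVelocity_eq, sum_mul_pd_copy]
  field_simp
  ring

theorem planar_poisson_equation {αN : ℝ} (hΦ : ContDiff ℝ 2 Φ) (hAB : A ^ 2 + B ^ 2 ≠ 0)
    (h01 : (0 : Fin N) ≠ 1)
    (hODE : ∀ s, deriv (deriv Φ) s = αN * Real.exp C / (A ^ 2 + B ^ 2) * Real.exp (-Φ s / K))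
    (x : Fin N → ℝ) :
    lap (planarPotential Φ A B a t) x = αN * planarDensity Φ K C A B a t x := by
  have hΦ' : Differentiable ℝ Φ := hΦ.differentiable (by norm_num)
  have hΦ'' : Differentiable ℝ (deriv Φ) := (hΦ.deriv' (n := 1)).differentiable (by norm_num)
  set ξ := (A * x 0 + B * x 1) / a t with hξ
  calc lap (planarPotential Φ A B a t) x
      = ∑ i : Fin N, deriv (deriv Φ) ξ * (planeNormal A B i / a t) ^ 2 :=
        Finset.sum_congr rfl fun i _ => pd_pd_comp_planar (h := Φ) hΦ' hΦ'' i x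
    _ = deriv (deriv Φ) ξ * (∑ i : Fin N, planeNormal A B i ^ 2) / a t ^ 2 := by
        rw [mul_div_assoc, Finset.sum_div, Finset.mul_sum]
        simp only [div_pow]
    _ = αN * planarDensity Φ K C A B a t x := by
        rw [sum_planeNormal_sq A B h01, hODE, planarDensity, ← hξ, Real.exp_add]
        field_simp

end EulerPoisson

theorem stmt_9_general {N : ℕ} [NeZero N] (hN : 3 ≤ N) (A B K C a₁ a₂ αN : ℝ)
    (hK : 0 < K) (hAB : 0 < A ^ 2 + B ^ 2)
    (Φ : ℝ → ℝ) (hΦ : ContDiff ℝ 2 Φ)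
    (hODE : ∀ s : ℝ, deriv (deriv Φ) s
        - (αN * Real.exp C / (A ^ 2 + B ^ 2)) * Real.exp (-Φ s / K) = 0)
    (a : ℝ → ℝ) (ha : a = fun t => a₁ + a₂ * t)
    (ρ : ℝ → (Fin N → ℝ) → ℝ)
    (hρ : ρ = fun t x =>
      Real.exp (-Φ ((A * x 0 + B * x 1) / a t) / K + C) / (a t) ^ 2)
    (u : ℝ → (Fin N → ℝ) → Fin N → ℝ)
    (hu : u = fun t x i => deriv a t / a t *
      (if i = 0 then x 0 else if i = 1 then x 1 else x 0))
    (Ψ : ℝ → (Fin N → ℝ) → ℝ)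
    (hΨ : Ψ = fun t x => Φ ((A * x 0 + B * x 1) / a t)) :
    ∀ t : ℝ, a t ≠ 0 → ∀ x : Fin N → ℝ,
      (deriv (fun s => ρ s x) t
          + ∑ i : Fin N, pd i (fun y => ρ t y * u t y i) x = 0) ∧
      (∀ i : Fin N,
        ρ t x * (deriv (fun s => u s x i) t
            + ∑ k : Fin N, u t x k * pd k (fun y => u t y i) x)
          + K * pd i (fun y => ρ t y) x = -(ρ t x * pd i (fun y => Ψ t y) x)) ∧
      lap (Ψ t) x = αN * ρ t x := by
  obtain rfl : ρ = planarDensity Φ K C A B a := hρ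
  obtain rfl : u = planarVelocity a := hu
  obtain rfl : Ψ = planarPotential Φ A B a := hΨ
  have h01 : (0 : Fin N) ≠ 1 := by
    rw [ne_eq, Fin.ext_iff, Fin.val_zero, Fin.val_one', Nat.one_mod_eq_one.mpr (by omega)]
    exact zero_ne_one
  have hΦ' : Differentiable ℝ Φ := hΦ.differentiable (by norm_num)
  have hda : ∀ t, HasDerivAt a a₂ t := fun t => by
    simpa [ha] using ((hasDerivAt_id t).const_mul a₂).const_add a₁
  have hdda : ∀ t, HasDerivAt (deriv a) 0 t := fun t => by
    simpa [funext fun s => (hda s).deriv] using hasDerivAt_const t a₂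
  intro t ht x
  exact ⟨planar_continuity_equation hΦ' (hda t).differentiableAt ht h01 x,
    planar_momentum_equation hK.ne' hΦ' (hda t).differentiableAt (hdda t) ht x,
    planar_poisson_equation hΦ hAB.ne' h01 (fun s => sub_eq_zero.mp (hODE s)) x⟩

/-- Theorem 2: the non-radial family `ρ = (1/a²) e^{-Φ((Ax₁+Bx₂)/a)/K + C}`,
`u = (ȧ/a)(x₁,x₂,x₁,…,x₁)`, `a(t) = a₁ + a₂t`, with
`Φ'' = (α(N)e^C/(A²+B²)) e^{-Φ/K}`, solves the isothermal Euler–Poisson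
system wherever `a(t) ≠ 0`. -/
theorem stmt_9 {N : ℕ} [NeZero N] (hN : 3 ≤ N) (A B K C a₁ a₂ αN : ℝ)
    (hK : 0 < K) (ha₁ : a₁ ≠ 0) (hAB : 0 < A ^ 2 + B ^ 2) (hαN : 0 < αN)
    (Φ : ℝ → ℝ) (hΦ : ContDiff ℝ 2 Φ)
    (hODE : ∀ s : ℝ, deriv (deriv Φ) s
        - (αN * Real.exp C / (A ^ 2 + B ^ 2)) * Real.exp (-Φ s / K) = 0)
    (a : ℝ → ℝ) (ha : a = fun t => a₁ + a₂ * t)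
    (ρ : ℝ → (Fin N → ℝ) → ℝ)
    (hρ : ρ = fun t x =>
      Real.exp (-Φ ((A * x 0 + B * x 1) / a t) / K + C) / (a t) ^ 2)
    (u : ℝ → (Fin N → ℝ) → Fin N → ℝ)
    (hu : u = fun t x i => deriv a t / a t *
      (if i = 0 then x 0 else if i = 1 then x 1 else x 0))
    (Ψ : ℝ → (Fin N → ℝ) → ℝ)
    (hΨ : Ψ = fun t x => Φ ((A * x 0 + B * x 1) / a t)) :
    ∀ t : ℝ, a t ≠ 0 → ∀ x : Fin N → ℝ,
      (deriv (fun s => ρ s x) t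
          + ∑ i : Fin N, pd i (fun y => ρ t y * u t y i) x = 0) ∧
      (∀ i : Fin N,
        ρ t x * (deriv (fun s => u s x i) t
            + ∑ k : Fin N, u t x k * pd k (fun y => u t y i) x)
          + K * pd i (fun y => ρ t y) x = -(ρ t x * pd i (fun y => Ψ t y) x)) ∧
      lap (Ψ t) x = αN * ρ t x :=
  stmt_9_general hN A B K C a₁ a₂ αN hK hAB Φ hΦ hODE a ha ρ hρ u hu Ψ hΨ
end
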